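/- Let (R, m) be a Noetherian local ring with dim R > 0, G ≅ R^e free of rank e > 0, and E ⊊ G an R-submodule with depth(G, E) > 0 (i.e., depth(G_n/E_n) > 0 for all large n). Then there exists a ∈ m such that a is a nonzerodivisor on G_n/E_n for all sufficiently large n and a lies in no minimal prime of R. -/

import Mathlib

open IsLocalRing

noncomputable section

/-- The embedding of `R^e` into the polynomial ring `S_R(R^e)` as linear forms. -/
def emb (R : Type*) [CommRing R] (e : ℕ) : (Fin e → R) →ₗ[R] MvPolynomial (Fin e) R where
  toFun v := ∑ i, v i • MvPolynomial.X i
  map_add' x y := by simp [add_smul, Finset.sum_add_distrib]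
  map_smul' r x := by simp [Finset.smul_sum, smul_smul]

/-- `E_n`, the `n`-th Rees power of `E ⊆ R^e`. -/
def reesPow {R : Type*} [CommRing R] {e : ℕ} (E : Submodule R (Fin e → R)) (n : ℕ) :
    Submodule R (MvPolynomial (Fin e) R) :=
  (Submodule.map (emb R e) E) ^ n

/-- The Rees algebra `R_G(E)` of `E ⊆ G = R^e`. -/
def ReesAlg {R : Type*} [CommRing R] {e : ℕ} (E : Submodule R (Fin e → R)) :
    Subalgebra R (MvPolynomial (Fin e) R) :=
  Algebra.adjoin R (Submodule.map (emb R e) E : Set (MvPolynomial (Fin e) R))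

/-- The quotient module `G_n/E_n`. -/
abbrev GmodE {R : Type*} [CommRing R] {e : ℕ} (E : Submodule R (Fin e → R)) (n : ℕ) :=
  ↥(reesPow (⊤ : Submodule R (Fin e → R)) n) ⧸
    (Submodule.comap (reesPow (⊤ : Submodule R (Fin e → R)) n).subtype (reesPow E n))

/-- Sup of lengths of `M`-regular sequences with entries in `I` (grade/depth). -/
def rdepth {R : Type*} [CommRing R] (I : Ideal R) (M : Type*) [AddCommGroup M] [Module R M] :
    ℕ∞ :=
  ⨆ (rs : List R) (_ : ∀ r ∈ rs, r ∈ I) (_ : RingTheory.Sequence.IsRegular M rs),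
    (rs.length : ℕ∞)

/-- Depth over a local ring. -/
def mdepth (R : Type*) [CommRing R] [IsLocalRing R] (M : Type*) [AddCommGroup M] [Module R M] :
    ℕ∞ :=
  rdepth (maximalIdeal R) M

/-- The extension `m·R_G(E)` of the maximal ideal to the Rees algebra. -/
def fibIdeal (R : Type*) [CommRing R] [IsLocalRing R] {e : ℕ} (E : Submodule R (Fin e → R)) :
    Ideal ↥(ReesAlg E) :=
  Ideal.map (algebraMap R ↥(ReesAlg E)) (maximalIdeal R)

/-- The analytic spread `ℓ_G(E) = dim R_G(E)/m·R_G(E)`. -/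
def aSpread (R : Type*) [CommRing R] [IsLocalRing R] {e : ℕ} (E : Submodule R (Fin e → R)) :
    WithBot ℕ∞ :=
  ringKrullDim (↥(ReesAlg E) ⧸ fibIdeal R E)

/-- The image `(E + IG)/IG ⊆ (R/I)^e`. -/
def pushE {R : Type*} [CommRing R] {e : ℕ} (I : Ideal R) (E : Submodule R (Fin e → R)) :
    Submodule (R ⧸ I) (Fin e → R ⧸ I) :=
  Submodule.span (R ⧸ I) ((fun v i => Ideal.Quotient.mk I (v i)) '' (E : Set (Fin e → R)))

/-!
By prime avoidance it suffices that only finitely many primes of `R` are associated to the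
modules `G_n/E_n`: then `a` can be taken in `m` outside the minimal primes and outside the
associated primes of `G_n/E_n` for large `n`. None of these is `m`, since `m` is not minimal
(`dim R > 0`) and is not associated to a module of positive depth.

For the finiteness, let `S = Sym(G)` be the polynomial ring and `I = E S`. An element of degree
`n` lying in `I^n` already lies in `E_n`, so `G_n/E_n` embeds into `S/I^n`. Filtering `S/I^n` by
the `I^k/I^(k+1)` puts its associated primes among those of the associated graded module
`gr_I(S)`, a finite module over the Noetherian Rees algebra `S[It]`; and a finite module over a
Noetherian `R`-algebra has only finitely many associated primes over `R`.
-/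

section AssociatedPrimesOverAlgebra

variable {R Λ : Type*} [CommRing R] [CommRing Λ] [Algebra R Λ]

theorem associatedPrimes_subset_of_linearEquiv_quotient_prime {N : Type*} [AddCommGroup N]
    [Module R N] [Module Λ N] [IsScalarTower R Λ N] {p : Ideal Λ} [p.IsPrime]
    (f : N ≃ₗ[Λ] Λ ⧸ p) : associatedPrimes R N ⊆ {p.comap (algebraMap R Λ)} := by
  rintro q ⟨hq, x, rfl⟩
  have hx : x ≠ 0 := by
    rintro rfl
    rw [Submodule.colon_singleton_zero, Ideal.radical_top] at hq
    exact hq.ne_top rfl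
  obtain ⟨y, hy⟩ := Ideal.Quotient.mk_surjective (f x)
  have hyp : y ∉ p := by
    rwa [← Ideal.Quotient.eq_zero_iff_mem, hy, LinearEquiv.map_eq_zero_iff]
  have hcolon : (⊥ : Submodule R N).colon {x} = p.comap (algebraMap R Λ) := by
    ext r
    rw [Submodule.mem_colon_singleton, Submodule.mem_bot, Ideal.mem_comap,
      ← algebraMap_smul Λ, ← f.map_eq_zero_iff, map_smul, ← hy, Algebra.smul_def,
      Ideal.Quotient.algebraMap_eq, ← map_mul, Ideal.Quotient.eq_zero_iff_mem]
    exact ⟨fun h => (Ideal.IsPrime.mem_or_mem ‹_› h).resolve_right hyp,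
      fun h => p.mul_mem_right y h⟩
  rw [hcolon, (Ideal.IsPrime.comap _).radical]
  rfl

theorem associatedPrimes.finite_of_isScalarTower [IsNoetherianRing Λ] (M : Type*)
    [AddCommGroup M] [Module R M] [Module Λ M] [IsScalarTower R Λ M] [Module.Finite Λ M] :
    (associatedPrimes R M).Finite := by
  -- The `R`-structure is determined by the tower; quantifying over it lets the induction
  -- equip the other terms of a short exact sequence with it.
  suffices ∀ [Module R M] [IsScalarTower R Λ M], (associatedPrimes R M).Finite from this
  induction ‹Module.Finite Λ M› using
    IsNoetherianRing.induction_on_isQuotientEquivQuotientPrime Λ with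
  | subsingleton N => simp [associatedPrimes.eq_empty_of_subsingleton]
  | quotient N p f =>
    exact (Set.finite_singleton _).subset (associatedPrimes_subset_of_linearEquiv_quotient_prime f)
  | exact N₁ N₂ N₃ f g hf _ hfg h₁ h₃ =>
    intro _ _
    let : Module R N₁ := Module.compHom N₁ (algebraMap R Λ)
    let : Module R N₃ := Module.compHom N₃ (algebraMap R Λ)
    have : IsScalarTower R Λ N₁ := ⟨fun r a x => by rw [Algebra.smul_def, mul_smul]; rfl⟩
    have : IsScalarTower R Λ N₃ := ⟨fun r a x => by rw [Algebra.smul_def, mul_smul]; rfl⟩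
    exact (h₁.union h₃).subset (associatedPrimes.subset_union_of_exact
      (f := f.restrictScalars R) (g := g.restrictScalars R) hf hfg)

end AssociatedPrimesOverAlgebra

namespace Ideal

variable {S : Type*} [CommRing S] (J : Ideal S)

def succPowFiltration : J.Filtration S where
  N i := J ^ (i + 1) • ⊤
  mono i := Submodule.smul_mono_left (Ideal.pow_le_pow_right (by omega))
  smul_le i := by rw [← mul_smul, ← pow_succ']

/-- `gr_J(S) = ⨁ Jⁿ/Jⁿ⁺¹`, as the Rees module of the `J`-adic filtration modulo its shift. -/
abbrev AssocGradedModule :=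
  ↥((J.stableFiltration (⊤ : Submodule S S)).submodule.map J.succPowFiltration.submodule.mkQ)

instance [IsNoetherianRing S] : Module.Finite (reesAlgebra J) J.AssocGradedModule :=
  Module.Finite.iff_fg.mpr <| Submodule.FG.map _ <|
    (Filtration.submodule_fg_iff_stable _ fun _ => IsNoetherian.noetherian _).mpr
      (J.stableFiltration_stable ⊤)

theorem single_mem_stableFiltration_submodule {n : ℕ} {x : S} (hx : x ∈ J ^ n) :
    PolynomialModule.single S n x ∈ (J.stableFiltration (⊤ : Submodule S S)).submodule := by
  intro i
  rw [PolynomialModule.coeff_single]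
  show _ ∈ J ^ i • ⊤
  rw [smul_eq_mul, mul_top, Finsupp.single_apply]
  split_ifs with h
  · exact h ▸ hx
  · exact zero_mem _

theorem single_mem_succPowFiltration_submodule_iff {n : ℕ} {x : S} :
    PolynomialModule.single S n x ∈ J.succPowFiltration.submodule ↔ x ∈ J ^ (n + 1) := by
  refine ⟨fun h => ?_, fun h i => ?_⟩
  · simpa [PolynomialModule.coeff_single, succPowFiltration, smul_eq_mul, mul_top] using h n
  · show _ ∈ J ^ (i + 1) • ⊤
    rw [PolynomialModule.coeff_single, smul_eq_mul, mul_top, Finsupp.single_apply]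
    split_ifs with hi
    · exact hi ▸ h
    · exact zero_mem _

def assocGradedSingle (n : ℕ) : ↥(J ^ n) →ₗ[S] J.AssocGradedModule where
  toFun x := ⟨J.succPowFiltration.submodule.mkQ (PolynomialModule.single S n x),
    Submodule.mem_map_of_mem (J.single_mem_stableFiltration_submodule x.2)⟩
  map_add' x y := by ext; simp
  map_smul' c x := by
    apply Subtype.ext
    change Submodule.Quotient.mk (PolynomialModule.single S n (c • (x : S))) =
      c • Submodule.Quotient.mk _
    rw [PolynomialModule.single_smul, Submodule.Quotient.mk_smul]

theorem assocGradedSingle_eq_zero_iff {n : ℕ} (x : ↥(J ^ n)) :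
    J.assocGradedSingle n x = 0 ↔ (x : S) ∈ J ^ (n + 1) := by
  rw [← J.single_mem_succPowFiltration_submodule_iff, ← Submodule.Quotient.mk_eq_zero,
    ← ZeroMemClass.coe_eq_zero]
  rfl

variable {R : Type*} [CommRing R] [Algebra R S]

theorem associatedPrimes_map_pow_mkQ_subset (n : ℕ) :
    associatedPrimes R (Submodule.map (J ^ (n + 1)).mkQ (J ^ n)) ⊆
      associatedPrimes R J.AssocGradedModule := by
  rintro q ⟨hq, ⟨y, hy⟩, rfl⟩
  obtain ⟨x, hx, rfl⟩ := Submodule.mem_map.mp hy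
  refine ⟨hq, J.assocGradedSingle n ⟨x, hx⟩, ?_⟩
  congr 1
  ext r
  rw [Submodule.mem_colon_singleton, Submodule.mem_bot, Submodule.mem_colon_singleton,
    Submodule.mem_bot, ← LinearMap.map_smul_of_tower, assocGradedSingle_eq_zero_iff,
    ← ZeroMemClass.coe_eq_zero, Submodule.coe_smul_of_tower]
  change r • Submodule.Quotient.mk x = 0 ↔ r • x ∈ J ^ (n + 1)
  rw [← Submodule.Quotient.mk_smul, Submodule.Quotient.mk_eq_zero]

theorem associatedPrimes_quotient_pow_subset (n : ℕ) :
    associatedPrimes R (S ⧸ J ^ n) ⊆ associatedPrimes R J.AssocGradedModule := by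
  induction n with
  | zero =>
    have : Subsingleton (S ⧸ J ^ 0) :=
      Ideal.Quotient.subsingleton_iff.mpr (by rw [pow_zero, one_eq_top])
    simp [associatedPrimes.eq_empty_of_subsingleton]
  | succ n ih =>
    set K := Submodule.map (J ^ (n + 1)).mkQ (J ^ n)
    let e := Submodule.quotientQuotientEquivQuotient (J ^ (n + 1)) (J ^ n)
      (Ideal.pow_le_pow_right n.le_succ)
    calc associatedPrimes R (S ⧸ J ^ (n + 1))
        ⊆ associatedPrimes R K ∪ associatedPrimes R ((S ⧸ J ^ (n + 1)) ⧸ K) :=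
          associatedPrimes.subset_union_of_exact (f := K.subtype.restrictScalars R)
            (g := K.mkQ.restrictScalars R) K.injective_subtype (LinearMap.exact_subtype_mkQ K)
      _ = associatedPrimes R K ∪ associatedPrimes R (S ⧸ J ^ n) := by
          rw [LinearEquiv.AssociatedPrimes.eq (e.restrictScalars R)]
      _ ⊆ _ := Set.union_subset (J.associatedPrimes_map_pow_mkQ_subset n) ih

theorem finite_iUnion_associatedPrimes_quotient_pow [IsNoetherianRing S] :
    (⋃ n, associatedPrimes R (S ⧸ J ^ n)).Finite :=
  (associatedPrimes.finite_of_isScalarTower (Λ := reesAlgebra J) J.AssocGradedModule).subset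
    (Set.iUnion_subset J.associatedPrimes_quotient_pow_subset)

end Ideal

theorem Ideal.span_pow_eq_span_pow_submodule {R A : Type*} [CommRing R] [CommRing A]
    [Algebra R A] (U : Submodule R A) (n : ℕ) :
    Ideal.span (U : Set A) ^ n = Ideal.span ↑(U ^ n) := by
  rw [Ideal.span, Submodule.span_pow]
  refine le_antisymm (Submodule.span_mono (Submodule.pow_subset_pow _)) (Submodule.span_le.mpr ?_)
  rw [Submodule.pow_eq_span_pow_set]
  exact Submodule.span_subset_span R A _

namespace MvPolynomial

variable {R σ : Type*} [CommRing R]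

theorem pow_le_homogeneousSubmodule {A : Submodule R (MvPolynomial σ R)}
    (hA : A ≤ homogeneousSubmodule σ R 1) (n : ℕ) : A ^ n ≤ homogeneousSubmodule σ R n := by
  induction n with
  | zero =>
    rw [pow_zero, Submodule.one_eq_range]
    rintro _ ⟨r, rfl⟩
    exact isHomogeneous_C σ r
  | succ n ih =>
    rw [pow_succ]
    exact (mul_le_mul' ih hA).trans (homogeneousSubmodule_mul n 1)

attribute [local instance] gradedAlgebra in
theorem homogeneousComponent_mul_of_mem {n : ℕ} {t : MvPolynomial σ R}
    (ht : t ∈ homogeneousSubmodule σ R n) (c : MvPolynomial σ R) :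
    homogeneousComponent n (c * t) = coeff 0 c • t := by
  rw [← decomposition.decompose'_apply, DirectSum.Decomposition.decompose'_eq,
    DirectSum.coe_decompose_mul_of_right_mem_of_le _ ht le_rfl, Nat.sub_self,
    ← DirectSum.Decomposition.decompose'_eq, decomposition.decompose'_apply,
    homogeneousComponent_zero, C_mul']

theorem homogeneousComponent_mem_of_mem_span {n : ℕ} {T : Submodule R (MvPolynomial σ R)}
    (hT : T ≤ homogeneousSubmodule σ R n) {s : MvPolynomial σ R}
    (hs : s ∈ Ideal.span (T : Set (MvPolynomial σ R))) : homogeneousComponent n s ∈ T := by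
  suffices ∀ c, homogeneousComponent n (c * s) ∈ T by simpa using this 1
  induction hs using Submodule.span_induction with
  | mem t ht => exact fun c => homogeneousComponent_mul_of_mem (hT ht) c ▸ T.smul_mem _ ht
  | zero => simp
  | add x y _ _ hx hy => exact fun c => by rw [mul_add, map_add]; exact add_mem (hx c) (hy c)
  | smul a x _ hx => exact fun c => by rw [smul_eq_mul, ← mul_assoc]; exact hx (c * a)

end MvPolynomial

section ReesPowers

open MvPolynomial

variable {R : Type*} [CommRing R] {e : ℕ}

theorem map_emb_le_homogeneousSubmodule_one (E : Submodule R (Fin e → R)) :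
    E.map (emb R e) ≤ homogeneousSubmodule (Fin e) R 1 := by
  rintro _ ⟨v, -, rfl⟩
  exact Submodule.sum_mem _ fun i _ =>
    Submodule.smul_mem _ _ ((mem_homogeneousSubmodule _ _).mpr (isHomogeneous_X R i))

theorem mem_reesPow_iff_mem_span_pow (E : Submodule R (Fin e → R)) {n : ℕ}
    {s : MvPolynomial (Fin e) R} (hs : s ∈ reesPow ⊤ n) :
    s ∈ reesPow E n ↔ s ∈ Ideal.span (E.map (emb R e) : Set (MvPolynomial (Fin e) R)) ^ n := by
  rw [Ideal.span_pow_eq_span_pow_submodule]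
  refine ⟨fun h => Ideal.subset_span h, fun h => ?_⟩
  have hsn : s ∈ homogeneousSubmodule (Fin e) R n :=
    pow_le_homogeneousSubmodule (map_emb_le_homogeneousSubmodule_one ⊤) n hs
  have := homogeneousComponent_mem_of_mem_span
    (pow_le_homogeneousSubmodule (map_emb_le_homogeneousSubmodule_one E) n) h
  rwa [homogeneousComponent_of_mem hsn, if_pos rfl] at this

def GmodE.toQuotientPow (E : Submodule R (Fin e → R)) (n : ℕ) :
    GmodE E n →ₗ[R]
      MvPolynomial (Fin e) R ⧸ Ideal.span (E.map (emb R e) : Set (MvPolynomial (Fin e) R)) ^ n :=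
  Submodule.liftQ _ ((Ideal.Quotient.mkₐ R _).toLinearMap ∘ₗ (reesPow ⊤ n).subtype)
    fun s hs => (Ideal.Quotient.eq_zero_iff_mem).mpr ((mem_reesPow_iff_mem_span_pow E s.2).mp hs)

theorem GmodE.toQuotientPow_injective (E : Submodule R (Fin e → R)) (n : ℕ) :
    Function.Injective (GmodE.toQuotientPow E n) := by
  rw [← LinearMap.ker_eq_bot]
  refine Submodule.ker_liftQ_eq_bot' _ _ (Submodule.ext fun s => ?_)
  rw [LinearMap.mem_ker, LinearMap.comp_apply, Submodule.subtype_apply, AlgHom.toLinearMap_apply,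
    Ideal.Quotient.mkₐ_eq_mk, Ideal.Quotient.eq_zero_iff_mem, ← mem_reesPow_iff_mem_span_pow E s.2]
  rfl

theorem finite_iUnion_associatedPrimes_gmodE [IsNoetherianRing R] (E : Submodule R (Fin e → R)) :
    (⋃ n, associatedPrimes R (GmodE E n)).Finite :=
  (Ideal.finite_iUnion_associatedPrimes_quotient_pow _).subset <| Set.iUnion_mono fun n =>
    associatedPrimes.subset_of_injective (GmodE.toQuotientPow_injective E n)

end ReesPowers

section LocalRing

variable {R : Type*} [CommRing R]

theorem isSMulRegular_iff_forall_notMem_associatedPrimes [IsNoetherianRing R] {M : Type*}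
    [AddCommGroup M] [Module R M] {a : R} :
    IsSMulRegular M a ↔ ∀ p ∈ associatedPrimes R M, a ∉ p := by
  have := (Set.ext_iff.mp (biUnion_associatedPrimes_eq_compl_regular R M) a).not
  simpa using this.symm

theorem exists_isSMulRegular_of_mdepth_pos [IsLocalRing R] {M : Type*} [AddCommGroup M]
    [Module R M] (h : 0 < mdepth R M) : ∃ r ∈ maximalIdeal R, IsSMulRegular M r := by
  simp only [mdepth, rdepth, lt_iSup_iff] at h
  obtain ⟨rs, hmem, hreg, hlen⟩ := h
  cases rs with
  | nil => simp at hlen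
  | cons r rs =>
    exact ⟨r, hmem r List.mem_cons_self,
      ((RingTheory.Sequence.isWeaklyRegular_cons_iff M r rs).mp hreg.toIsWeaklyRegular).1⟩

theorem IsLocalRing.maximalIdeal_notMem_minimalPrimes [IsLocalRing R]
    (h : (0 : WithBot ℕ∞) < ringKrullDim R) : maximalIdeal R ∉ minimalPrimes R := by
  intro hm
  have : Ring.KrullDimLE 0 R := .mk₀ fun I hI =>
    have hle := le_maximalIdeal hI.ne_top
    le_antisymm hle (hm.2 ⟨hI, bot_le⟩ hle) ▸ maximalIdeal.isMaximal R
  rw [ringKrullDimZero_iff_ringKrullDim_eq_zero.mp this] at h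
  exact h.false

theorem Ideal.IsMaximal.exists_mem_forall_notMem_of_finite {M : Ideal R} (hM : M.IsMaximal)
    {s : Set (Ideal R)} (hs : s.Finite) (hprime : ∀ p ∈ s, p.IsPrime) (hMs : M ∉ s) :
    ∃ a ∈ M, ∀ p ∈ s, a ∉ p := by
  have := (Ideal.subset_iUnion_iff_mem_of_isMaximal_of_finite hs M M
    (fun p hp _ _ => hprime p hp) hM.ne_top hM.ne_top).not.mpr hMs
  simpa [Set.not_subset] using this

end LocalRing

theorem stmt9_general (R : Type*) [CommRing R] [IsNoetherianRing R] [IsLocalRing R]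
    (e : ℕ) (E : Submodule R (Fin e → R))
    (hdim : (0 : WithBot ℕ∞) < ringKrullDim R)
    (hdepth : ∃ N, ∀ n ≥ N, 0 < mdepth R (GmodE E n)) :
    ∃ a ∈ maximalIdeal R, (∃ N, ∀ n ≥ N, IsSMulRegular (GmodE E n) a) ∧
      ∀ p ∈ minimalPrimes R, a ∉ p := by
  obtain ⟨N, hN⟩ := hdepth
  set A := ⋃ n ≥ N, associatedPrimes R (GmodE E n)
  have hA : A.Finite :=
    (finite_iUnion_associatedPrimes_gmodE E).subset (Set.iUnion₂_subset_iUnion _ _)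
  have hmA : maximalIdeal R ∉ A := by
    simp only [A, Set.mem_iUnion]
    rintro ⟨n, hn, hm⟩
    obtain ⟨r, hr, hreg⟩ := exists_isSMulRegular_of_mdepth_pos (hN n hn)
    exact isSMulRegular_iff_forall_notMem_associatedPrimes.mp hreg _ hm hr
  obtain ⟨a, ham, ha⟩ := (maximalIdeal.isMaximal R).exists_mem_forall_notMem_of_finite
    (hA.union (minimalPrimes.finite_of_isNoetherianRing R))
    (by
      rintro p (hp | hp)
      exacts [(Set.mem_iUnion₂.mp hp).elim fun _ ⟨_, h⟩ => h.isPrime, hp.1.1])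
    (by
      rintro (hm | hm)
      exacts [hmA hm, maximalIdeal_notMem_minimalPrimes hdim hm])
  exact ⟨a, ham, ⟨N, fun n hn => isSMulRegular_iff_forall_notMem_associatedPrimes.mpr
    fun p hp => ha p (Or.inl (Set.mem_biUnion hn hp))⟩, fun p hp => ha p (Or.inr hp)⟩

theorem stmt9 (R : Type*) [CommRing R] [IsNoetherianRing R] [IsLocalRing R]
    (e : ℕ) (he : 0 < e) (E : Submodule R (Fin e → R)) (hE : E ≠ ⊤)
    (hdim : (0 : WithBot ℕ∞) < ringKrullDim R)
    (hdepth : ∃ N, ∀ n ≥ N, 0 < mdepth R (GmodE E n)) :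
    ∃ a ∈ maximalIdeal R, (∃ N, ∀ n ≥ N, IsSMulRegular (GmodE E n) a) ∧
      ∀ p ∈ minimalPrimes R, a ∉ p :=
  stmt9_general R e E hdim hdepth

end
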